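/- For all a ∈ c₀₀ and all integers n ≥ 0, ‖a‖_{T̈} ≤ Σ_{i=0}^n ρ′_i(a)/2^i + 2^{-(n+1)} sup{ Σ_{i=1}^j ‖E_i a‖_{T̈} : {E₁, …, E_j} is 𝓖′_{n+1}-admissible }, where ρ′_i = ‖·‖_{𝓕′_i}. -/

import Mathlib

open Ordinal Filter Topology

namespace LTIndex

/-- `E < F` for finite sets: `max E < min F` (with `max ∅ = 0`, `min ∅ = ∞`),
equivalently every element of `E` is less than every element of `F`. -/
def finLT (E F : Finset ℕ) : Prop := ∀ a ∈ E, ∀ b ∈ F, a < b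

/-- `min E` (junk value `0` when `E = ∅`). -/
noncomputable def minOf (E : Finset ℕ) : ℕ := sInf (E : Set ℕ)

/-- `{E₁, …, E_n}` is `𝓕`-admissible: the `Eᵢ` are nonempty, `E₁ < ⋯ < E_n`
and `{min E₁, …, min E_n} ∈ 𝓕`. -/
def IsAdmissible (𝓕 : Set (Finset ℕ)) (l : List (Finset ℕ)) : Prop :=
  (∀ E ∈ l, E.Nonempty) ∧ l.Chain' finLT ∧ (l.map minOf).toFinset ∈ 𝓕

/-- `𝓜[𝓝]`. -/
def famComp (M N : Set (Finset ℕ)) : Set (Finset ℕ) :=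
  {F | ∃ l : List (Finset ℕ), IsAdmissible M l ∧ (∀ E ∈ l, E ∈ N) ∧
    F = l.foldr (· ∪ ·) ∅}

/-- `(𝓜, 𝓝) = {M ∪ N : M < N, M ∈ 𝓜, N ∈ 𝓝}`. -/
def pairFam (M N : Set (Finset ℕ)) : Set (Finset ℕ) :=
  {F | ∃ A ∈ M, ∃ B ∈ N, finLT A B ∧ F = A ∪ B}

/-- `𝓜² = (𝓜, 𝓜)`. -/
def sqFam (M : Set (Finset ℕ)) : Set (Finset ℕ) := pairFam M M

/-- `S₀ = {{n} : n ∈ ℕ} ∪ {∅}`. -/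
def schreierZero : Set (Finset ℕ) := {F : Finset ℕ | F.card ≤ 1}

/-- `S₁ = {F : |F| ≤ min F}`. -/
noncomputable def schreierOne : Set (Finset ℕ) := {F : Finset ℕ | F.card ≤ minOf F}

/-- A ladder system: for every countable limit ordinal `o`, `seq o` is a strictly
increasing sequence of ordinals below `o` with supremum `o`. -/
def IsCtblLadder (seq : Ordinal.{0} → ℕ → Ordinal.{0}) : Prop :=
  ∀ o : Ordinal, o.card ≤ Cardinal.aleph0 → Order.IsSuccLimit o →
    StrictMono (seq o) ∧ (∀ n : ℕ, seq o n < o) ∧ (⨆ n : ℕ, seq o n) = o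

/-- The Schreier classes `S_α`, relative to a choice `seq` of ladders at limit
ordinals: `S₀` is the singletons together with `∅`, `S_{α+1} = S₁[S_α]`, and at a
limit `α` (with ladder `(α_n) = seq α`), `S_α = {F : F ∈ S_{α_n} for some n ≤ |F|}`. -/
noncomputable def schreier (seq : Ordinal.{0} → ℕ → Ordinal.{0}) (o : Ordinal.{0}) :
    Set (Finset ℕ) :=
  Ordinal.limitRecOn (motive := fun _ => Set (Finset ℕ)) o schreierZero
    (fun _ S => famComp schreierOne S)
    (fun o _ ih => {F | ∃ n : ℕ, n ≤ F.card ∧ ∃ h : seq o n < o, F ∈ ih (seq o n) h})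

/-- `σ_F(x) = ∑_{n ∈ F} |x n|`. -/
noncomputable def sigmaF (F : Finset ℕ) (x : ℕ →₀ ℝ) : ℝ := ∑ n ∈ F, |x n|

/-- `‖x‖_𝓕 = sup_{F ∈ 𝓕} σ_F(x)`. -/
noncomputable def famNorm (𝓕 : Set (Finset ℕ)) (x : ℕ →₀ ℝ) : ℝ :=
  sSup {r : ℝ | ∃ F ∈ 𝓕, r = sigmaF F x}

/-- `E x`: the coordinate restriction of `x` to `E`. -/
noncomputable def restr (E : Finset ℕ) (x : ℕ →₀ ℝ) : ℕ →₀ ℝ :=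
  Finsupp.filter (· ∈ E) x

/-- The norms `‖·‖_n` (when `Sadm = S_β`), resp. `‖·‖′_n` (when `Sadm = (S_β)²`):
`‖·‖₀ = ‖·‖_{S_α}` and
`‖x‖_{n+1} = max{‖x‖_n, sup{(1/2)∑ᵢ ‖Eᵢx‖_n : {E₁,…,E_j} Sadm-admissible}}`. -/
noncomputable def normSeq (Sa Sadm : Set (Finset ℕ)) : ℕ → (ℕ →₀ ℝ) → ℝ
  | 0, x => famNorm Sa x
  | n + 1, x =>
      max (normSeq Sa Sadm n x)
        (sSup {r : ℝ | ∃ l : List (Finset ℕ), IsAdmissible Sadm l ∧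
          r = (1 / 2) * ((l.map fun E => normSeq Sa Sadm n (restr E x)).sum)})

/-- `‖x‖_{T̃}` (resp. `‖x‖_{T̈}`): the limit (= supremum, the sequence being
nondecreasing) of the norms `‖x‖_n` (resp. `‖x‖′_n`). -/
noncomputable def tnorm (Sa Sadm : Set (Finset ℕ)) (x : ℕ →₀ ℝ) : ℝ :=
  ⨆ n : ℕ, normSeq Sa Sadm n x

/-- The families `𝓕_n` (with `Sadm = S_β`), resp. `𝓕′_n` (with `Sadm = (S_β)²`):
`𝓕₀ = S_α`, `𝓕_{n+1} = Sadm[𝓕_n]`. -/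
def famF (Sa Sadm : Set (Finset ℕ)) : ℕ → Set (Finset ℕ)
  | 0 => Sa
  | n + 1 => famComp Sadm (famF Sa Sadm n)

/-- The families `𝓖_n` (with `Sadm = S_β`), resp. `𝓖′_n` (with `Sadm = (S_β)²`),
reindexed: `famG Sadm n = 𝓖_{n+1}`, i.e. `famG Sadm 0 = 𝓖₁ = Sadm` and
`𝓖_{n+2} = Sadm[𝓖_{n+1}]`. -/
def famG (Sadm : Set (Finset ℕ)) : ℕ → Set (Finset ℕ)
  | 0 => Sadm
  | n + 1 => famComp Sadm (famG Sadm n)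

/-- Hereditary family. -/
def Hereditary (𝓕 : Set (Finset ℕ)) : Prop := ∀ A ∈ 𝓕, ∀ B ⊆ A, B ∈ 𝓕

/-- Spreading family. -/
def Spreading (𝓕 : Set (Finset ℕ)) : Prop :=
  ∀ A ∈ 𝓕, ∀ g : ℕ → ℕ, StrictMonoOn g (A : Set ℕ) → (∀ a ∈ A, a ≤ g a) →
    A.image g ∈ 𝓕

/-- Compactness of a family of finite sets, viewed inside `2^ℕ` (ℕ → Bool with the
product topology) via characteristic functions. -/
def CompactFam (𝓕 : Set (Finset ℕ)) : Prop :=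
  IsCompact ((fun A : Finset ℕ => fun n : ℕ => decide (n ∈ A)) '' 𝓕)

/-- Regular family: hereditary, spreading and compact. -/
def RegularFam (𝓕 : Set (Finset ℕ)) : Prop :=
  Hereditary 𝓕 ∧ Spreading 𝓕 ∧ CompactFam 𝓕

/-- The Cantor–Bendixson derivative of a family of finite subsets of ℕ: the set of
its limit points in the product topology of `2^ℕ` (a basic neighbourhood of `A` is
determined by an agreement of initial segments). -/
def famDeriv (𝓕 : Set (Finset ℕ)) : Set (Finset ℕ) :=
  {A | ∀ m : ℕ, ∃ B ∈ 𝓕, B ≠ A ∧ B.filter (· ≤ m) = A.filter (· ≤ m)}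

/-- Iterated Cantor–Bendixson derivatives `𝓕^{(o)}`. -/
noncomputable def famDerivIter (𝓕 : Set (Finset ℕ)) (o : Ordinal.{0}) : Set (Finset ℕ) :=
  Ordinal.limitRecOn (motive := fun _ => Set (Finset ℕ)) o 𝓕
    (fun _ S => famDeriv S)
    (fun o _ ih => ⋂ (o' : Ordinal) (h : o' < o), ih o' h)

/-- One step of the standard representation: `A` is obtained from the remainder `R`
as `R ∩ [1, k]` where `k` is the largest element of `F` with `R ∩ [1, k] ∈ 𝓝`. -/
def stepOf (N : Set (Finset ℕ)) (F R A : Finset ℕ) : Prop :=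
  ∃ k ∈ F, A = R.filter (· ≤ k) ∧ A ∈ N ∧
    ∀ k' ∈ F, R.filter (· ≤ k') ∈ N → k' ≤ k

/-- `IsStdRepFrom N F R L`: starting from remainder `R`, the list `L` is produced by
the greedy recursion defining the standard representation, exhausting `R`. -/
def IsStdRepFrom (N : Set (Finset ℕ)) (F : Finset ℕ) : Finset ℕ → List (Finset ℕ) → Prop
  | R, [] => R = ∅
  | R, A :: L => stepOf N F R A ∧ IsStdRepFrom N F (R \ A) L

/-- `L` is the standard representation of `F` (as an element of `𝓜[𝓝]`). -/
def IsStdRep (N : Set (Finset ℕ)) (F : Finset ℕ) (L : List (Finset ℕ)) : Prop :=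
  IsStdRepFrom N F F L

section Trees

variable {X : Type*}

/-- A tree on `X`: a set of nonempty finite sequences closed under nonempty initial
segments. -/
def IsTree (T : Set (List X)) : Prop :=
  ∀ l ∈ T, l ≠ [] ∧ ∀ m : ℕ, 0 < m → m < l.length → l.take m ∈ T

/-- A tree is well-founded if it has no infinite branch. -/
def WellFoundedTree (T : Set (List X)) : Prop :=
  ¬ ∃ f : ℕ → X, ∀ n : ℕ, (List.ofFn fun i : Fin (n + 1) => f i) ∈ T

/-- The derived tree `D(T)`. -/
def treeDeriv (T : Set (List X)) : Set (List X) :=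
  {l | l ∈ T ∧ ∃ x : X, l ++ [x] ∈ T}

/-- Iterated derived trees `D^o(T)`. -/
noncomputable def treeDerivIter (T : Set (List X)) (o : Ordinal.{0}) : Set (List X) :=
  Ordinal.limitRecOn (motive := fun _ => Set (List X)) o T
    (fun _ S => treeDeriv S)
    (fun o _ ih => ⋂ (o' : Ordinal) (h : o' < o), ih o' h)

/-- The order `o(T)` of a (well-founded) tree. -/
noncomputable def treeOrder (T : Set (List X)) : Ordinal.{0} :=
  sInf {o : Ordinal | treeDerivIter T o = ∅}

end Trees

section Banach

variable (X : Type) [NormedAddCommGroup X] [NormedSpace ℝ X]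

/-- `cs` witnesses that the node `l` is a finite block basis of `(e_i)`: each entry
of `l` is the (finite, nonzero) linear combination of the `e_i` given by the
corresponding entry of `cs`, and the supports are successive. -/
def IsBlockNode (e : ℕ → X) (l : List X) (cs : List (ℕ →₀ ℝ)) : Prop :=
  cs.length = l.length ∧
  (∀ (i : ℕ) (h : i < cs.length) (h' : i < l.length),
    l.get ⟨i, h'⟩ = (cs.get ⟨i, h⟩).sum fun n r => r • e n) ∧
  (∀ c ∈ cs, c ≠ 0) ∧
  cs.Chain' fun c d => finLT c.support d.support

/-- `e` is a (Schauder) basis of `X`. -/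
def IsSchauderBasis (e : ℕ → X) : Prop :=
  ∀ x : X, ∃! a : ℕ → ℝ,
    Tendsto (fun n => ∑ i ∈ Finset.range n, a i • e i) atTop (𝓝 x)

/-- An `ℓ¹`-`K` tree on `X`: a tree on the unit sphere of `X` such that every node
`(x₁, …, x_n)` satisfies `‖∑ aᵢ xᵢ‖ ≥ K⁻¹ ∑ |aᵢ|`. -/
def IsL1Tree (K : ℝ) (T : Set (List X)) : Prop :=
  IsTree T ∧ ∀ l ∈ T, (∀ x ∈ l, ‖x‖ = 1) ∧
    ∀ a : Fin l.length → ℝ, K⁻¹ * ∑ i, |a i| ≤ ‖∑ i : Fin l.length, a i • l.get i‖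

/-- `I(X, K)`: the supremum of the orders of well-founded `ℓ¹`-`K` trees on `X`. -/
noncomputable def bourgainIndexK (K : ℝ) : Ordinal.{0} :=
  ⨆ T : {T : Set (List X) // IsL1Tree X K T ∧ WellFoundedTree T}, treeOrder T.1

/-- The Bourgain `ℓ¹`-index `I(X) = sup_{1 ≤ K < ∞} I(X, K)`. -/
noncomputable def bourgainIndex : Ordinal.{0} :=
  ⨆ K : {K : ℝ // 1 ≤ K}, bourgainIndexK X K.1

/-- `I_b(X, K)` relative to the basis `e`: the supremum of the orders of
well-founded `ℓ¹`-`K` block trees on `X`. -/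
noncomputable def blockIndexK (e : ℕ → X) (K : ℝ) : Ordinal.{0} :=
  ⨆ T : {T : Set (List X) //
      IsL1Tree X K T ∧ (∀ l ∈ T, ∃ cs, IsBlockNode X e l cs) ∧ WellFoundedTree T},
    treeOrder T.1

/-- The block `ℓ¹`-index `I_b(X) = sup_{1 ≤ K < ∞} I_b(X, K)`. -/
noncomputable def blockIndex (e : ℕ → X) : Ordinal.{0} :=
  ⨆ K : {K : ℝ // 1 ≤ K}, blockIndexK X e K.1

end Banach

/-!
Induction on `n`, for all `x` at once. Every `‖x‖′_m`, hence `‖x‖_{T̈}`, is at most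
`ρ′₀(x) + ½ sup Σᵢ ‖Eᵢx‖_{T̈}`, the supremum taken over `(S_β)²`-admissible families; this is
the case `n = 0`. For the step, apply the induction hypothesis to every `Eᵢx` in that supremum
and regroup: for an `(S_β)²`-admissible family, `Σᵢ ρ_𝓝(Eᵢx) ≤ ρ_{(S_β)²[𝓝]}(x)`, and
`𝓖′_k`-admissible families chosen for the `Eᵢx`, cut down to `Eᵢ` and concatenated, form one
`𝓖′_{k+1}`-admissible family. Both regroupings rest on cutting down the sets of an admissible
family keeping it admissible, i.e. on `(S_β)²` being hereditary and spreading, and on the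
families `𝓕′_i`, `𝓖′_k` being hereditary.
-/

lemma list_sum_sSup_le {ι : Type*} {l : List ι} {f : ι → Set ℝ} {C : ℝ}
    (hne : ∀ i ∈ l, (f i).Nonempty) (h : ∀ r : ι → ℝ, (∀ i ∈ l, r i ∈ f i) → (l.map r).sum ≤ C) :
    (l.map fun i => sSup (f i)).sum ≤ C := by
  refine le_of_forall_pos_lt_add fun ε hε => ?_
  set δ := ε / (l.length + 1)
  have hδ : 0 < δ := by positivity
  have hlen : (l.length : ℝ) * δ < ε := by
    rw [mul_div_assoc', div_lt_iff₀ (by positivity)]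
    nlinarith
  have happrox : ∀ i, ∃ r : ℝ, i ∈ l → r ∈ f i ∧ sSup (f i) < r + δ := by
    intro i
    by_cases hi : i ∈ l
    · obtain ⟨r, hr, hlt⟩ := exists_lt_of_lt_csSup (hne i hi) (sub_lt_self (sSup (f i)) hδ)
      exact ⟨r, fun _ => ⟨hr, by linarith⟩⟩
    · exact ⟨0, fun h => absurd h hi⟩
  choose r hr using happrox
  calc (l.map fun i => sSup (f i)).sum
      ≤ (l.map fun i => r i + δ).sum := List.sum_le_sum fun i hi => (hr i hi).2.le
    _ = (l.map r).sum + l.length * δ := by simp [List.sum_map_add]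
    _ < C + ε := by linarith [h r fun i hi => (hr i hi).1]

lemma sum_map_filter_nonempty {f : Finset ℕ → ℝ} (hf : f ∅ = 0) (l : List (Finset ℕ)) :
    ((l.filter (·.Nonempty)).map f).sum = (l.map f).sum := by
  induction l with
  | nil => rfl
  | cons G t ih => rcases G.eq_empty_or_nonempty with rfl | hG <;> simp [*]

lemma minOf_mem {E : Finset ℕ} (h : E.Nonempty) : minOf E ∈ E := by
  simpa [minOf] using Nat.sInf_mem (s := (E : Set ℕ)) (by exact_mod_cast h)

lemma minOf_le {E : Finset ℕ} {a : ℕ} (ha : a ∈ E) : minOf E ≤ a :=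
  Nat.sInf_le (by simpa using ha)

lemma minOf_singleton (m : ℕ) : minOf {m} = m := by
  simp [minOf]

lemma finLT.mono {E F G H : Finset ℕ} (h : finLT E F) (hG : G ⊆ E) (hH : H ⊆ F) :
    finLT G H :=
  fun a ha b hb => h a (hG ha) b (hH hb)

lemma finLT.minOf_lt {E F : Finset ℕ} (h : finLT E F) (hE : E.Nonempty) (hF : F.Nonempty) :
    minOf E < minOf F :=
  h _ (minOf_mem hE) _ (minOf_mem hF)

lemma finLT.disjoint {E F : Finset ℕ} (h : finLT E F) : Disjoint E F :=
  Finset.disjoint_left.mpr fun {a} haE haF => lt_irrefl a (h a haE a haF)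

lemma mem_foldr_union {l : List (Finset ℕ)} {n : ℕ} :
    n ∈ l.foldr (· ∪ ·) ∅ ↔ ∃ E ∈ l, n ∈ E := by
  induction l with
  | nil => simp
  | cons a t ih => simp [ih]

lemma image_foldr_union (g : ℕ → ℕ) (l : List (Finset ℕ)) :
    (l.foldr (· ∪ ·) ∅).image g = (l.map (Finset.image g)).foldr (· ∪ ·) ∅ := by
  induction l with
  | nil => simp
  | cons a t ih => simp [Finset.image_union, ih]

/-- `finLT` is transitive only through a nonempty middle set. -/
lemma pairwise_finLT_of_isChain {l : List (Finset ℕ)} (hne : ∀ E ∈ l, E.Nonempty)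
    (hc : l.IsChain finLT) : l.Pairwise finLT := by
  let R : Finset ℕ → Finset ℕ → Prop := fun E F => F.Nonempty ∧ finLT E F
  have : Trans R R R := ⟨fun ⟨hF, hEF⟩ ⟨hG, hFG⟩ =>
    ⟨hG, fun a ha c hc => (hEF a ha _ (minOf_mem hF)).trans (hFG _ (minOf_mem hF) c hc)⟩⟩
  have hcR : l.IsChain R := by
    induction l with
    | nil => exact List.isChain_nil
    | cons a t ih =>
      cases t with
      | nil => exact List.isChain_singleton _
      | cons b t =>
        rw [List.isChain_cons_cons] at hc
        exact List.isChain_cons_cons.mpr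
          ⟨⟨hne b (by simp), hc.1⟩, ih (fun E hE => hne E (List.mem_cons_of_mem _ hE)) hc.2⟩
  exact (List.isChain_iff_pairwise.mp hcR).imp And.right

lemma finLT_trichotomy {l : List (Finset ℕ)} (hl : l.Pairwise finLT)
    {E F : Finset ℕ} (hE : E ∈ l) (hF : F ∈ l) : E = F ∨ finLT E F ∨ finLT F E := by
  obtain ⟨i, hi, rfl⟩ := List.getElem_of_mem hE
  obtain ⟨j, hj, rfl⟩ := List.getElem_of_mem hF
  rcases lt_trichotomy i j with h | rfl | h
  · exact Or.inr (Or.inl (List.pairwise_iff_getElem.mp hl i j hi hj h))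
  · exact Or.inl rfl
  · exact Or.inr (Or.inr (List.pairwise_iff_getElem.mp hl j i hj hi h))

lemma finLT_of_minOf_lt {l : List (Finset ℕ)} (hl : l.Pairwise finLT)
    (hne : ∀ E ∈ l, E.Nonempty) {E F : Finset ℕ} (hE : E ∈ l) (hF : F ∈ l)
    (h : minOf E < minOf F) : finLT E F := by
  rcases finLT_trichotomy hl hE hF with rfl | hEF | hFE
  · exact absurd h (lt_irrefl _)
  · exact hEF
  · exact absurd ((hFE.minOf_lt (hne F hF) (hne E hE)).trans h) (lt_irrefl _)

section Admissible

variable {M N K : Set (Finset ℕ)} {l : List (Finset ℕ)}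

lemma IsAdmissible.pairwise (hl : IsAdmissible M l) : l.Pairwise finLT :=
  pairwise_finLT_of_isChain hl.1 hl.2.1

lemma IsAdmissible.card_minset (hl : IsAdmissible M l) :
    (l.map minOf).toFinset.card = l.length := by
  classical
  rw [List.toFinset_card_of_nodup, List.length_map]
  refine List.Pairwise.nodup (r := (· < ·)) (List.pairwise_map.mpr ?_)
  exact hl.pairwise.imp_of_mem fun hE hF h => h.minOf_lt (hl.1 _ hE) (hl.1 _ hF)

lemma isAdmissible_nil (hM : ∅ ∈ M) : IsAdmissible M [] :=
  ⟨by simp, List.isChain_nil, by simpa using hM⟩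

lemma isAdmissible_singleton {E : Finset ℕ} (hE : E.Nonempty) (hM : {minOf E} ∈ M) :
    IsAdmissible M [E] :=
  ⟨by simpa using hE, List.isChain_singleton E, by simpa using hM⟩

lemma empty_mem_famComp (hM : ∅ ∈ M) : ∅ ∈ famComp M N :=
  ⟨[], isAdmissible_nil hM, by simp, rfl⟩

lemma Spreading.image_mem {ι : Type*} (hM : Spreading M) {s : Finset ι} {u v : ι → ℕ}
    (hu : Set.InjOn u s) (hlt : ∀ i ∈ s, ∀ j ∈ s, u i < u j → v i < v j)
    (hle : ∀ i ∈ s, u i ≤ v i) (hs : s.image u ∈ M) : s.image v ∈ M := by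
  classical
  let g : ℕ → ℕ := fun a => if h : ∃ i ∈ s, u i = a then v h.choose else a
  have hg : ∀ i ∈ s, g (u i) = v i := by
    intro i hi
    have h : ∃ j ∈ s, u j = u i := ⟨i, hi, rfl⟩
    simp only [g, dif_pos h, hu h.choose_spec.1 hi h.choose_spec.2]
  have himage : (s.image u).image g = s.image v := by
    rw [Finset.image_image]
    exact Finset.image_congr fun i hi => hg i hi
  rw [← himage]
  refine hM _ hs g ?_ ?_
  · intro a ha b hb hab
    obtain ⟨i, hi, rfl⟩ := Finset.mem_image.mp ha
    obtain ⟨j, hj, rfl⟩ := Finset.mem_image.mp hb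
    rw [hg i hi, hg j hj]
    exact hlt i hi j hj hab
  · simp only [Finset.mem_image, forall_exists_index, and_imp, forall_apply_eq_imp_iff₂]
    exact fun i hi => (hle i hi).trans_eq (hg i hi).symm

/-- The new minima dominate the old ones and come in the same order, so spreading applies. -/
lemma IsAdmissible.map_filter (hMh : Hereditary M) (hMs : Spreading M) (hl : IsAdmissible M l)
    {f : Finset ℕ → Finset ℕ} (hf : ∀ E ∈ l, f E ⊆ E) :
    IsAdmissible M ((l.map f).filter (·.Nonempty)) := by
  classical
  have hp := hl.pairwise
  refine ⟨fun G hG => by simpa using (List.mem_filter.mp hG).2, ?_, ?_⟩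
  · refine ((List.pairwise_map.mpr ?_).filter _).isChain
    exact hp.imp_of_mem fun hE hF h => h.mono (hf _ hE) (hf _ hF)
  set s := (l.filter fun E => (f E).Nonempty).toFinset
  have hs : ∀ E ∈ s, E ∈ l ∧ (f E).Nonempty := by simp [s]
  have hmin : (((l.map f).filter (·.Nonempty)).map minOf).toFinset = s.image (minOf ∘ f) := by
    ext m
    simp [s, List.filter_map]
  rw [hmin]
  refine hMs.image_mem (u := minOf) ?_ ?_ ?_ ?_
  · intro E hE F hF h
    rcases finLT_trichotomy hp (hs E hE).1 (hs F hF).1 with h' | h' | h'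
    · exact h'
    · exact absurd h (h'.minOf_lt (hl.1 E (hs E hE).1) (hl.1 F (hs F hF).1)).ne
    · exact absurd h (h'.minOf_lt (hl.1 F (hs F hF).1) (hl.1 E (hs E hE).1)).ne'
  · intro E hE F hF h
    have hEF := finLT_of_minOf_lt hp hl.1 (hs E hE).1 (hs F hF).1 h
    exact (hEF.mono (hf E (hs E hE).1) (hf F (hs F hF).1)).minOf_lt (hs E hE).2 (hs F hF).2
  · exact fun E hE => minOf_le (hf E (hs E hE).1 (minOf_mem (hs E hE).2))
  · refine hMh _ hl.2.2 _ fun m hm => ?_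
    obtain ⟨E, hE, rfl⟩ := Finset.mem_image.mp hm
    simpa using ⟨E, (hs E hE).1, rfl⟩

end Admissible

section FamilyOperations

variable {M N K : Set (Finset ℕ)}

lemma Hereditary.famComp (hMh : Hereditary M) (hMs : Spreading M) (hN : Hereditary N) :
    Hereditary (famComp M N) := by
  rintro _ ⟨l, hl, hlN, rfl⟩ B hB
  refine ⟨(l.map (· ∩ B)).filter (·.Nonempty),
    hl.map_filter hMh hMs fun E _ => Finset.inter_subset_left, ?_, ?_⟩
  · intro G hG
    obtain ⟨E, hE, rfl⟩ := List.mem_map.mp (List.mem_filter.mp hG).1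
    exact hN E (hlN E hE) _ Finset.inter_subset_left
  · ext n
    simp only [mem_foldr_union, List.mem_filter, List.mem_map, decide_eq_true_eq]
    constructor
    · intro hn
      obtain ⟨E, hE, hnE⟩ := mem_foldr_union.mp (hB hn)
      exact ⟨E ∩ B, ⟨⟨E, hE, rfl⟩, n, Finset.mem_inter.mpr ⟨hnE, hn⟩⟩,
        Finset.mem_inter.mpr ⟨hnE, hn⟩⟩
    · rintro ⟨_, ⟨⟨E, -, rfl⟩, -⟩, hn⟩
      exact (Finset.mem_inter.mp hn).2

lemma minOf_image {g : ℕ → ℕ} {E F : Finset ℕ} (hE : E.Nonempty) (hEF : E ⊆ F)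
    (hg : StrictMonoOn g F) : minOf (E.image g) = g (minOf E) := by
  refine le_antisymm (minOf_le (Finset.mem_image_of_mem g (minOf_mem hE))) ?_
  obtain ⟨a, ha, hga⟩ := Finset.mem_image.mp (minOf_mem (hE.image g))
  rw [← hga]
  exact hg.monotoneOn (hEF (minOf_mem hE)) (hEF ha) (minOf_le ha)

lemma Spreading.famComp (hM : Spreading M) (hN : Spreading N) : Spreading (famComp M N) := by
  rintro _ ⟨l, hl, hlN, rfl⟩ g hg hge
  set U := l.foldr (· ∪ ·) ∅
  have hsub : ∀ E ∈ l, E ⊆ U := fun E hE n hn => mem_foldr_union.mpr ⟨E, hE, hn⟩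
  have hminU : ((l.map minOf).toFinset : Set ℕ) ⊆ U := by
    intro m hm
    obtain ⟨E, hE, rfl⟩ := List.mem_map.mp (List.mem_toFinset.mp hm)
    exact hsub E hE (minOf_mem (hl.1 E hE))
  have hminset : ((l.map (Finset.image g)).map minOf).toFinset =
      (l.map minOf).toFinset.image g := by
    have himage : ∀ E ∈ l, (minOf ∘ Finset.image g) E = g (minOf E) :=
      fun E hE => minOf_image (hl.1 E hE) (hsub E hE) hg
    rw [List.map_map, List.map_congr_left himage]
    ext m
    simp
  refine ⟨l.map (Finset.image g), ⟨?_, ?_, ?_⟩, ?_, ?_⟩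
  · simp only [List.mem_map, forall_exists_index, and_imp, forall_apply_eq_imp_iff₂]
    exact fun E hE => (hl.1 E hE).image g
  · refine (List.pairwise_map.mpr (hl.pairwise.imp_of_mem fun hE hF h => ?_)).isChain
    intro _ ha _ hb
    obtain ⟨a, ha', rfl⟩ := Finset.mem_image.mp ha
    obtain ⟨b, hb', rfl⟩ := Finset.mem_image.mp hb
    exact hg (hsub _ hE ha') (hsub _ hF hb') (h a ha' b hb')
  · rw [hminset]
    exact hM _ hl.2.2 g (hg.mono hminU) fun a ha => hge a (hminU ha)
  · simp only [List.mem_map, forall_exists_index, and_imp, forall_apply_eq_imp_iff₂]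
    exact fun E hE => hN E (hlN E hE) g (hg.mono (Finset.coe_subset.mpr (hsub E hE)))
      fun a ha => hge a (hsub E hE ha)
  · exact image_foldr_union g l

lemma Hereditary.sqFam (hM : Hereditary M) : Hereditary (sqFam M) := by
  rintro _ ⟨A, hA, C, hC, hAC, rfl⟩ B hB
  refine ⟨B ∩ A, hM A hA _ Finset.inter_subset_right, B ∩ C, hM C hC _ Finset.inter_subset_right,
    hAC.mono Finset.inter_subset_right Finset.inter_subset_right, ?_⟩
  rw [← Finset.inter_union_distrib_left, Finset.inter_eq_left.mpr hB]

lemma Spreading.sqFam (hM : Spreading M) : Spreading (sqFam M) := by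
  rintro _ ⟨A, hA, C, hC, hAC, rfl⟩ g hg hge
  have hsA : (A : Set ℕ) ⊆ ↑(A ∪ C) := Finset.coe_subset.mpr Finset.subset_union_left
  have hsC : (C : Set ℕ) ⊆ ↑(A ∪ C) := Finset.coe_subset.mpr Finset.subset_union_right
  refine ⟨A.image g, hM A hA g (hg.mono hsA) fun a ha => hge a (hsA ha),
    C.image g, hM C hC g (hg.mono hsC) fun a ha => hge a (hsC ha), ?_, Finset.image_union A C⟩
  intro _ ha _ hb
  obtain ⟨a, ha', rfl⟩ := Finset.mem_image.mp ha
  obtain ⟨b, hb', rfl⟩ := Finset.mem_image.mp hb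
  exact hg (hsA ha') (hsC hb') (hAC a ha' b hb')

lemma empty_mem_sqFam (hM : ∅ ∈ M) : ∅ ∈ sqFam M :=
  ⟨∅, hM, ∅, hM, by simp [finLT], by simp⟩

lemma IsAdmissible.flatten (hMh : Hereditary M) (hMs : Spreading M) {l : List (Finset ℕ)}
    (hl : IsAdmissible M l) {d : Finset ℕ → List (Finset ℕ)}
    (hd : ∀ E ∈ l, IsAdmissible K (d E)) (hdE : ∀ E ∈ l, ∀ D ∈ d E, D ⊆ E) :
    IsAdmissible (famComp M K) (l.map d).flatten := by
  have hne : ∀ E ∈ l, ((d E).map minOf).toFinset ⊆ E := by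
    intro E hE m hm
    obtain ⟨D, hD, rfl⟩ := List.mem_map.mp (List.mem_toFinset.mp hm)
    exact hdE E hE D hD (minOf_mem ((hd E hE).1 D hD))
  refine ⟨?_, ?_, ?_⟩
  · simp only [List.mem_flatten, List.mem_map]
    rintro D ⟨_, ⟨E, hE, rfl⟩, hD⟩
    exact (hd E hE).1 D hD
  · refine List.Pairwise.isChain (List.pairwise_flatten.mpr ⟨?_, ?_⟩)
    · simp only [List.mem_map, forall_exists_index, and_imp, forall_apply_eq_imp_iff₂]
      exact fun E hE => (hd E hE).pairwise
    · exact List.pairwise_map.mpr (hl.pairwise.imp_of_mem fun hE hF h D hD D' hD' =>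
        h.mono (hdE _ hE D hD) (hdE _ hF D' hD'))
  · refine ⟨(l.map fun E => ((d E).map minOf).toFinset).filter (·.Nonempty),
      hl.map_filter hMh hMs hne, ?_, ?_⟩
    · simp only [List.mem_filter, List.mem_map]
      rintro _ ⟨⟨E, hE, rfl⟩, -⟩
      exact (hd E hE).2.2
    · ext m
      simp only [List.mem_toFinset, List.mem_map, List.mem_flatten, mem_foldr_union,
        List.mem_filter, decide_eq_true_eq]
      constructor
      · rintro ⟨D, ⟨_, ⟨E, hE, rfl⟩, hD⟩, rfl⟩
        exact ⟨_, ⟨⟨E, hE, rfl⟩, minOf D, by simpa using ⟨D, hD, rfl⟩⟩, by simpa using ⟨D, hD, rfl⟩⟩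
      · rintro ⟨_, ⟨⟨E, hE, rfl⟩, -⟩, hm⟩
        obtain ⟨D, hD, rfl⟩ := List.mem_map.mp (List.mem_toFinset.mp hm)
        exact ⟨D, ⟨d E, ⟨E, hE, rfl⟩, hD⟩, rfl⟩

end FamilyOperations

section FamilySequences

variable {Sa Sadm : Set (Finset ℕ)}

lemma hereditary_famF (hSa : Hereditary Sa) (hh : Hereditary Sadm) (hs : Spreading Sadm) :
    ∀ i, Hereditary (famF Sa Sadm i)
  | 0 => hSa
  | i + 1 => hh.famComp hs (hereditary_famF hSa hh hs i)

lemma empty_mem_famF (hSa : ∅ ∈ Sa) (h0 : ∅ ∈ Sadm) : ∀ i, ∅ ∈ famF Sa Sadm i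
  | 0 => hSa
  | _ + 1 => empty_mem_famComp h0

lemma hereditary_famG (hh : Hereditary Sadm) (hs : Spreading Sadm) :
    ∀ n, Hereditary (famG Sadm n)
  | 0 => hh
  | n + 1 => hh.famComp hs (hereditary_famG hh hs n)

lemma spreading_famG (hs : Spreading Sadm) : ∀ n, Spreading (famG Sadm n)
  | 0 => hs
  | n + 1 => hs.famComp (spreading_famG hs n)

lemma empty_mem_famG (h0 : ∅ ∈ Sadm) : ∀ n, ∅ ∈ famG Sadm n
  | 0 => h0
  | _ + 1 => empty_mem_famComp h0

end FamilySequences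

section Schreier

variable {seq : Ordinal.{0} → ℕ → Ordinal.{0}}

lemma schreier_zero : schreier seq 0 = schreierZero := by
  rw [schreier, Ordinal.limitRecOn_zero]

lemma schreier_add_one (o : Ordinal) :
    schreier seq (o + 1) = famComp schreierOne (schreier seq o) := by
  rw [schreier, Ordinal.limitRecOn_add_one]
  rfl

lemma schreier_limit {o : Ordinal} (h : Order.IsSuccLimit o) :
    schreier seq o = {F | ∃ n : ℕ, n ≤ F.card ∧ ∃ _ : seq o n < o, F ∈ schreier seq (seq o n)} := by
  rw [schreier, Ordinal.limitRecOn_limit _ _ _ _ h]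
  rfl

lemma hereditary_schreierOne : Hereditary schreierOne := by
  intro A hA B hB
  rcases B.eq_empty_or_nonempty with rfl | hBne
  · simp [schreierOne]
  · exact (Finset.card_le_card hB).trans (hA.trans (minOf_le (hB (minOf_mem hBne))))

lemma spreading_schreierOne : Spreading schreierOne := by
  intro A hA g hg hge
  rcases A.eq_empty_or_nonempty with rfl | hAne
  · simpa using hA
  · obtain ⟨a, ha, hga⟩ := Finset.mem_image.mp (minOf_mem (hAne.image g))
    show (A.image g).card ≤ minOf (A.image g)
    rw [Finset.card_image_of_injOn hg.injOn, ← hga]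
    exact hA.trans ((minOf_le ha).trans (hge a ha))

lemma singleton_mem_schreierOne {m : ℕ} (hm : 1 ≤ m) : {m} ∈ schreierOne := by
  simpa [schreierOne, minOf_singleton] using hm

lemma empty_mem_schreier (hseq : IsCtblLadder seq) {o : Ordinal} (hc : o.card ≤ Cardinal.aleph0) :
    ∅ ∈ schreier seq o := by
  induction o using Ordinal.limitRecOn with
  | zero => simp [schreier_zero, schreierZero]
  | add_one o ih =>
    rw [schreier_add_one]
    exact empty_mem_famComp (by simp [schreierOne])
  | limit o ho ih =>
    obtain ⟨-, hlt, -⟩ := hseq o hc ho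
    rw [schreier_limit ho]
    exact ⟨0, Nat.zero_le _, hlt 0, ih _ (hlt 0) ((Ordinal.card_le_card (hlt 0).le).trans hc)⟩

lemma spreading_schreier {o : Ordinal} : Spreading (schreier seq o) := by
  induction o using Ordinal.limitRecOn with
  | zero =>
    rw [schreier_zero]
    exact fun A hA g _ _ => Finset.card_image_le.trans hA
  | add_one o ih =>
    rw [schreier_add_one]
    exact spreading_schreierOne.famComp ih
  | limit o ho ih =>
    rw [schreier_limit ho]
    rintro A ⟨n, hn, h, hA⟩ g hg hge
    exact ⟨n, (Finset.card_image_of_injOn hg.injOn).symm ▸ hn, h, ih _ h A hA g hg hge⟩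

/-- A point `m ≤ 1` of `F` is the minimum of its block, and then `S₁` admits only one block. -/
lemma eq_singleton_of_mem_schreier {o : Ordinal} {F : Finset ℕ} (hF : F ∈ schreier seq o)
    {m : ℕ} (hmF : m ∈ F) (hm : m ≤ 1) : F = {m} := by
  induction o using Ordinal.limitRecOn generalizing F with
  | zero =>
    rw [schreier_zero] at hF
    exact Finset.eq_singleton_iff_unique_mem.mpr
      ⟨hmF, fun b hb => Finset.card_le_one.mp hF b hb m hmF⟩
  | add_one o ih =>
    rw [schreier_add_one] at hF
    obtain ⟨l, hl, hlS, rfl⟩ := hF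
    obtain ⟨E, hE, hmE⟩ := mem_foldr_union.mp hmF
    have hEmin : minOf E ∈ (l.map minOf).toFinset := by simpa using ⟨E, hE, rfl⟩
    have hlen : l.length ≤ 1 := by
      rw [← hl.card_minset]
      exact hl.2.2.trans ((minOf_le hEmin).trans ((minOf_le hmE).trans hm))
    obtain ⟨E', rfl⟩ := List.length_eq_one_iff.mp (hlen.antisymm (List.length_pos_of_mem hE))
    obtain rfl : E = E' := by simpa using hE
    simpa using ih (hlS E (by simp)) (by simpa using hmF)
  | limit o ho ih =>
    rw [schreier_limit ho] at hF
    obtain ⟨n, -, h, hF⟩ := hF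
    exact ih _ h hF hmF

lemma mem_schreier_add_one {o : Ordinal} {F : Finset ℕ} (hF : F ∈ schreier seq o)
    (hne : F.Nonempty) (hmin : 1 ≤ minOf F) : F ∈ schreier seq (o + 1) := by
  rw [schreier_add_one]
  exact ⟨[F], isAdmissible_singleton hne (singleton_mem_schreierOne hmin), by simpa using hF,
    by simp⟩

lemma insert_mem_schreier_add_one {o : Ordinal} {m : ℕ} {F : Finset ℕ} (hm : 2 ≤ m)
    (hmS : {m} ∈ schreier seq o) (hF : F ∈ schreier seq o) (hne : F.Nonempty)
    (hmF : ∀ b ∈ F, m < b) : insert m F ∈ schreier seq (o + 1) := by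
  rw [schreier_add_one]
  have hminset : ([{m}, F].map minOf).toFinset = {m, minOf F} := by simp [minOf_singleton]
  have hcard : ({m, minOf F} : Finset ℕ).card ≤ 2 := Finset.card_le_two
  have hlow : 2 ≤ minOf ({m, minOf F} : Finset ℕ) := by
    rcases Finset.mem_insert.mp (minOf_mem (Finset.insert_nonempty m {minOf F})) with h | h
    · omega
    · rw [Finset.mem_singleton.mp h]
      exact hm.trans (hmF _ (minOf_mem hne)).le
  refine ⟨[{m}, F], ⟨?_, ?_, ?_⟩, ?_, ?_⟩
  · simpa using hne
  · exact List.isChain_pair.mpr fun a ha b hb => Finset.mem_singleton.mp ha ▸ hmF b hb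
  · rw [hminset]
    exact hcard.trans hlow
  · simpa using ⟨hmS, hF⟩
  · rw [Finset.insert_eq]
    simp

lemma singleton_mem_schreier (hseq : IsCtblLadder seq) {m : ℕ} (hm : 1 ≤ m) {o : Ordinal}
    (hc : o.card ≤ Cardinal.aleph0) : {m} ∈ schreier seq o := by
  induction o using Ordinal.limitRecOn with
  | zero => simp [schreier_zero, schreierZero]
  | add_one o ih =>
    exact mem_schreier_add_one (ih ((Ordinal.card_le_card le_self_add).trans hc))
      (Finset.singleton_nonempty m) (by rwa [minOf_singleton])
  | limit o ho ih =>
    obtain ⟨-, hlt, -⟩ := hseq o hc ho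
    rw [schreier_limit ho]
    exact ⟨0, Nat.zero_le _, hlt 0, ih _ (hlt 0) ((Ordinal.card_le_card (hlt 0).le).trans hc)⟩

lemma natCast_le_of_strictMono {f : ℕ → Ordinal} (hf : StrictMono f) (n : ℕ) :
    (n : Ordinal) ≤ f n := by
  induction n with
  | zero => exact zero_le
  | succ n ih =>
    rw [Nat.cast_succ]
    exact Order.add_one_le_of_lt (ih.trans_lt (hf n.lt_succ_self))

/-- This makes the limit classes hereditary without assuming that the classes along a ladder
increase. -/
lemma mem_schreier_of_card_le (hseq : IsCtblLadder seq) {o : Ordinal}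
    (hc : o.card ≤ Cardinal.aleph0) {F : Finset ℕ} (hne : F.Nonempty) (hmin : 2 ≤ minOf F)
    (hcard : (F.card : Ordinal) ≤ o) : F ∈ schreier seq o := by
  induction o using Ordinal.limitRecOn generalizing F with
  | zero =>
    exact absurd (Nat.cast_eq_zero.mp (nonpos_iff_eq_zero.mp hcard)) hne.card_pos.ne'
  | add_one o ih =>
    have hc' : o.card ≤ Cardinal.aleph0 :=
      (Ordinal.card_le_card le_self_add).trans hc
    obtain ⟨m, hmF, hm⟩ : ∃ m ∈ F, minOf F = m := ⟨_, minOf_mem hne, rfl⟩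
    rcases (F.erase m).eq_empty_or_nonempty with hF' | hF'
    · rw [← Finset.insert_erase hmF, hF', insert_empty_eq]
      exact singleton_mem_schreier hseq (by omega) hc
    have hlt : ∀ b ∈ F.erase m, m < b := fun b hb =>
      hm ▸ (minOf_le (Finset.mem_of_mem_erase hb)).lt_of_ne (hm ▸ Finset.ne_of_mem_erase hb).symm
    have hcard' : ((F.erase m).card : Ordinal) ≤ o := by
      rw [← Finset.card_erase_add_one hmF, Nat.cast_add_one] at hcard
      simpa using hcard
    rw [← Finset.insert_erase hmF]
    exact insert_mem_schreier_add_one (hm ▸ hmin) (singleton_mem_schreier hseq (by omega) hc')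
      (ih hc' hF' (hmin.trans (minOf_le (Finset.mem_of_mem_erase (minOf_mem hF')))) hcard')
      hF' hlt
  | limit o ho ih =>
    obtain ⟨hmono, hlt, -⟩ := hseq o hc ho
    rw [schreier_limit ho]
    exact ⟨F.card, le_rfl, hlt _, ih _ (hlt _) ((Ordinal.card_le_card (hlt _).le).trans hc)
      hne hmin (natCast_le_of_strictMono hmono _)⟩

lemma hereditary_schreier (hseq : IsCtblLadder seq) {o : Ordinal}
    (hc : o.card ≤ Cardinal.aleph0) : Hereditary (schreier seq o) := by
  induction o using Ordinal.limitRecOn with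
  | zero =>
    rw [schreier_zero]
    exact fun A hA B hB => (Finset.card_le_card hB).trans hA
  | add_one o ih =>
    rw [schreier_add_one]
    exact hereditary_schreierOne.famComp spreading_schreierOne
      (ih ((Ordinal.card_le_card le_self_add).trans hc))
  | limit o ho ih =>
    obtain ⟨hmono, hlt, -⟩ := hseq o hc ho
    have hc' : ∀ k, (seq o k).card ≤ Cardinal.aleph0 :=
      fun k => (Ordinal.card_le_card (hlt k).le).trans hc
    rw [schreier_limit ho]
    rintro A ⟨n, hn, h, hA⟩ B hB
    by_cases hnB : n ≤ B.card
    · exact ⟨n, hnB, h, ih _ h (hc' n) A hA B hB⟩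
    rcases B.eq_empty_or_nonempty with rfl | hBne
    · exact ⟨0, le_rfl, hlt 0, empty_mem_schreier hseq (hc' 0)⟩
    have hmin : 2 ≤ minOf B := by
      by_contra! h2
      have hA1 := eq_singleton_of_mem_schreier hA (hB (minOf_mem hBne)) (Nat.lt_succ_iff.mp h2)
      rw [hA1] at hB hn
      rw [(Finset.subset_singleton_iff.mp hB).resolve_left hBne.ne_empty] at hnB
      exact hnB hn
    exact ⟨B.card, le_rfl, hlt _, mem_schreier_of_card_le hseq (hc' _) hBne hmin
      (natCast_le_of_strictMono hmono _)⟩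

end Schreier

section Norms

lemma sigmaF_nonneg (F : Finset ℕ) (x : ℕ →₀ ℝ) : 0 ≤ sigmaF F x :=
  Finset.sum_nonneg fun _ _ => abs_nonneg _

lemma restr_apply (E : Finset ℕ) (x : ℕ →₀ ℝ) (n : ℕ) :
    restr E x n = if n ∈ E then x n else 0 :=
  Finsupp.filter_apply _ _ _

lemma restr_restr (D E : Finset ℕ) (x : ℕ →₀ ℝ) : restr D (restr E x) = restr (D ∩ E) x := by
  ext n
  simp only [restr_apply, Finset.mem_inter]
  split_ifs <;> tauto

lemma sigmaF_restr (F E : Finset ℕ) (x : ℕ →₀ ℝ) :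
    sigmaF F (restr E x) = sigmaF (F ∩ E) x := by
  rw [sigmaF, sigmaF, ← Finset.sum_ite_mem]
  refine Finset.sum_congr rfl fun n _ => ?_
  rw [restr_apply]
  split_ifs <;> simp

lemma sum_sigmaF_inter_le {l : List (Finset ℕ)} (hl : l.Pairwise Disjoint) (F : Finset ℕ)
    (x : ℕ →₀ ℝ) : (l.map fun E => sigmaF (F ∩ E) x).sum ≤ sigmaF F x := by
  induction l generalizing F with
  | nil => exact sigmaF_nonneg F x
  | cons E t ih =>
    rw [List.pairwise_cons] at hl
    have hdiff : ∀ D ∈ t, F ∩ D = (F \ E) ∩ D := fun D hD => by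
      ext n
      simp only [Finset.mem_inter, Finset.mem_sdiff]
      exact ⟨fun h => ⟨⟨h.1, fun hE => Finset.disjoint_left.mp (hl.1 D hD) hE h.2⟩, h.2⟩,
        fun h => ⟨h.1.1, h.2⟩⟩
    calc (List.map (fun D => sigmaF (F ∩ D) x) (E :: t)).sum
        = sigmaF (F ∩ E) x + (t.map fun D => sigmaF ((F \ E) ∩ D) x).sum := by
          rw [List.map_cons, List.sum_cons, List.map_congr_left fun D hD => by rw [hdiff D hD]]
      _ ≤ sigmaF (F ∩ E) x + sigmaF (F \ E) x := by gcongr; exact ih hl.2 _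
      _ = sigmaF F x := Finset.sum_inter_add_sum_sdiff F E _

lemma sigmaF_le_sigmaF_support (F : Finset ℕ) (x : ℕ →₀ ℝ) :
    sigmaF F x ≤ sigmaF x.support x := by
  have hout : ∑ n ∈ F \ x.support, |x n| = 0 :=
    Finset.sum_eq_zero fun n hn => by simpa using (Finset.mem_sdiff.mp hn).2
  rw [sigmaF, ← Finset.sum_inter_add_sum_sdiff F x.support, hout, add_zero]
  exact Finset.sum_le_sum_of_subset_of_nonneg Finset.inter_subset_right fun _ _ _ => abs_nonneg _

lemma sum_sigmaF_support_restr_le {l : List (Finset ℕ)} (hl : l.Pairwise finLT) (x : ℕ →₀ ℝ) :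
    (l.map fun E => sigmaF (restr E x).support (restr E x)).sum ≤ sigmaF x.support x := by
  have h : ∀ E, sigmaF (restr E x).support (restr E x) = sigmaF (x.support ∩ E) x := fun E => by
    rw [restr, Finsupp.support_filter, Finset.filter_mem_eq_inter, ← restr, sigmaF_restr,
      Finset.inter_assoc, Finset.inter_self]
  simp only [h]
  exact sum_sigmaF_inter_le (hl.imp finLT.disjoint) _ x

lemma famNorm_nonneg (𝓕 : Set (Finset ℕ)) (x : ℕ →₀ ℝ) : 0 ≤ famNorm 𝓕 x :=
  Real.sSup_nonneg (by rintro _ ⟨F, -, rfl⟩; exact sigmaF_nonneg F x)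

lemma famNorm_le_sigmaF_support (𝓕 : Set (Finset ℕ)) (x : ℕ →₀ ℝ) :
    famNorm 𝓕 x ≤ sigmaF x.support x :=
  Real.sSup_le (by rintro _ ⟨F, -, rfl⟩; exact sigmaF_le_sigmaF_support F x) (sigmaF_nonneg _ x)

lemma sigmaF_le_famNorm {𝓕 : Set (Finset ℕ)} {F : Finset ℕ} (hF : F ∈ 𝓕) (x : ℕ →₀ ℝ) :
    sigmaF F x ≤ famNorm 𝓕 x :=
  le_csSup ⟨sigmaF x.support x, by rintro _ ⟨F, -, rfl⟩; exact sigmaF_le_sigmaF_support F x⟩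
    ⟨F, hF, rfl⟩

variable {Sa Sadm : Set (Finset ℕ)}

lemma normSeq_nonneg (n : ℕ) (x : ℕ →₀ ℝ) : 0 ≤ normSeq Sa Sadm n x := by
  induction n with
  | zero => exact famNorm_nonneg Sa x
  | succ n ih => exact ih.trans (le_max_left _ _)

lemma normSeq_le_sigmaF_support (n : ℕ) (x : ℕ →₀ ℝ) :
    normSeq Sa Sadm n x ≤ sigmaF x.support x := by
  induction n generalizing x with
  | zero => exact famNorm_le_sigmaF_support Sa x
  | succ n ih =>
    refine max_le (ih x) (Real.sSup_le ?_ (sigmaF_nonneg _ x))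
    rintro _ ⟨l, hl, rfl⟩
    have := (List.sum_le_sum fun E _ => ih (restr E x)).trans
      (sum_sigmaF_support_restr_le hl.pairwise x)
    linarith [sigmaF_nonneg x.support x]

lemma normSeq_le_tnorm (n : ℕ) (x : ℕ →₀ ℝ) : normSeq Sa Sadm n x ≤ tnorm Sa Sadm x :=
  le_ciSup (f := fun m => normSeq Sa Sadm m x)
    ⟨sigmaF x.support x, by rintro _ ⟨m, rfl⟩; exact normSeq_le_sigmaF_support m x⟩ n

lemma tnorm_nonneg (x : ℕ →₀ ℝ) : 0 ≤ tnorm Sa Sadm x :=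
  (normSeq_nonneg 0 x).trans (normSeq_le_tnorm 0 x)

lemma tnorm_le_sigmaF_support (x : ℕ →₀ ℝ) : tnorm Sa Sadm x ≤ sigmaF x.support x :=
  ciSup_le fun n => normSeq_le_sigmaF_support n x

lemma tnorm_restr_empty (x : ℕ →₀ ℝ) : tnorm Sa Sadm (restr ∅ x) = 0 :=
  le_antisymm ((tnorm_le_sigmaF_support _).trans_eq (by simp [sigmaF, restr_apply]))
    (tnorm_nonneg _)

end Norms

section Estimates

variable {M N K Sa Sadm : Set (Finset ℕ)} {l : List (Finset ℕ)}

lemma sum_famNorm_le_famNorm_famComp (hMh : Hereditary M) (hMs : Spreading M)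
    (hNh : Hereditary N) (hN0 : ∅ ∈ N) (hl : IsAdmissible M l) (x : ℕ →₀ ℝ) :
    (l.map fun E => famNorm N (restr E x)).sum ≤ famNorm (famComp M N) x := by
  refine list_sum_sSup_le (fun E _ => ⟨_, ∅, hN0, rfl⟩) fun r hr => ?_
  choose! F hFN hrF using hr
  set Gs := (l.map fun E => F E ∩ E).filter (·.Nonempty)
  have hGs : IsAdmissible M Gs := hl.map_filter hMh hMs fun E _ => Finset.inter_subset_right
  have hU : Gs.foldr (· ∪ ·) ∅ ∈ famComp M N := by
    refine ⟨Gs, hGs, fun G hG => ?_, rfl⟩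
    obtain ⟨E, hE, rfl⟩ := List.mem_map.mp (List.mem_filter.mp hG).1
    exact hNh _ (hFN E hE) _ Finset.inter_subset_left
  calc (l.map r).sum = (Gs.map fun G => sigmaF G x).sum := by
        rw [List.map_congr_left fun E hE => (hrF E hE).trans (sigmaF_restr _ _ _),
          sum_map_filter_nonempty (by simp [sigmaF]), List.map_map]
        rfl
    _ = (Gs.map fun G => sigmaF (Gs.foldr (· ∪ ·) ∅ ∩ G) x).sum := by
        refine congrArg List.sum (List.map_congr_left fun G hG => ?_)
        rw [Finset.inter_eq_right.mpr fun n hn => mem_foldr_union.mpr ⟨G, hG, hn⟩]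
    _ ≤ sigmaF (Gs.foldr (· ∪ ·) ∅) x :=
        sum_sigmaF_inter_le (hGs.pairwise.imp finLT.disjoint) _ x
    _ ≤ famNorm (famComp M N) x := sigmaF_le_famNorm hU x

def admissibleSums (Sa Sadm K : Set (Finset ℕ)) (x : ℕ →₀ ℝ) : Set ℝ :=
  {r | ∃ l : List (Finset ℕ), IsAdmissible K l ∧
    r = (l.map fun E => tnorm Sa Sadm (restr E x)).sum}

lemma bddAbove_admissibleSums (x : ℕ →₀ ℝ) : BddAbove (admissibleSums Sa Sadm K x) := by
  refine ⟨sigmaF x.support x, ?_⟩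
  rintro _ ⟨l, hl, rfl⟩
  exact (List.sum_le_sum fun E _ => tnorm_le_sigmaF_support _).trans
    (sum_sigmaF_support_restr_le hl.pairwise x)

lemma sSup_admissibleSums_nonneg (x : ℕ →₀ ℝ) : 0 ≤ sSup (admissibleSums Sa Sadm K x) := by
  refine Real.sSup_nonneg ?_
  rintro _ ⟨l, -, rfl⟩
  exact List.sum_nonneg fun _ h => by
    obtain ⟨E, -, rfl⟩ := List.mem_map.mp h
    exact tnorm_nonneg _

lemma sum_tnorm_le_sSup_admissibleSums (hl : IsAdmissible K l) (x : ℕ →₀ ℝ) :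
    (l.map fun E => tnorm Sa Sadm (restr E x)).sum ≤ sSup (admissibleSums Sa Sadm K x) :=
  le_csSup (bddAbove_admissibleSums x) ⟨l, hl, rfl⟩

/-- The sets of the `K`-admissible families are cut down to the `E`'s of `l` before being
concatenated into one `M[K]`-admissible family. -/
lemma sum_sSup_admissibleSums_le (hMh : Hereditary M) (hMs : Spreading M) (hKh : Hereditary K)
    (hKs : Spreading K) (hK0 : ∅ ∈ K) (hl : IsAdmissible M l) (x : ℕ →₀ ℝ) :
    (l.map fun E => sSup (admissibleSums Sa Sadm K (restr E x))).sum ≤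
      sSup (admissibleSums Sa Sadm (famComp M K) x) := by
  refine list_sum_sSup_le (fun E _ => ⟨0, [], isAdmissible_nil hK0, rfl⟩) fun r hr => ?_
  choose! d hd hrd using hr
  set d' := fun E => ((d E).map (· ∩ E)).filter (·.Nonempty)
  have hd' : ∀ E ∈ l, IsAdmissible K (d' E) :=
    fun E hE => (hd E hE).map_filter hKh hKs fun D _ => Finset.inter_subset_left
  have hd'E : ∀ E ∈ l, ∀ D ∈ d' E, D ⊆ E := by
    intro E _ D hD
    obtain ⟨D, -, rfl⟩ := List.mem_map.mp (List.mem_filter.mp hD).1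
    exact Finset.inter_subset_right
  have hr' : ∀ E ∈ l, r E = ((d' E).map fun D => tnorm Sa Sadm (restr D x)).sum := by
    intro E hE
    rw [hrd E hE, sum_map_filter_nonempty (tnorm_restr_empty x), List.map_map]
    simp only [Function.comp_def, restr_restr]
  refine (sum_tnorm_le_sSup_admissibleSums (hl.flatten hMh hMs hd' hd'E) x).trans_eq' ?_
  rw [List.map_congr_left hr', List.map_flatten, List.sum_flatten, List.map_map, List.map_map]
  rfl

lemma tnorm_le_famNorm_add_half_sSup (x : ℕ →₀ ℝ) :
    tnorm Sa Sadm x ≤ famNorm Sa x + 1 / 2 * sSup (admissibleSums Sa Sadm Sadm x) := by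
  have hS := sSup_admissibleSums_nonneg (Sa := Sa) (Sadm := Sadm) (K := Sadm) x
  have hρ := famNorm_nonneg Sa x
  refine ciSup_le fun m => ?_
  induction m with
  | zero =>
    change famNorm Sa x ≤ _
    linarith
  | succ m ih =>
    refine max_le ih (Real.sSup_le ?_ (by linarith))
    rintro _ ⟨l, hl, rfl⟩
    have := (List.sum_le_sum fun E _ => normSeq_le_tnorm m (restr E x)).trans
      (sum_tnorm_le_sSup_admissibleSums (Sa := Sa) (Sadm := Sadm) hl x)
    linarith

lemma sSup_admissibleSums_le_of_forall_tnorm_le (hSa : Hereditary Sa) (hSa0 : ∅ ∈ Sa)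
    (hh : Hereditary Sadm) (hs : Spreading Sadm) (h0 : ∅ ∈ Sadm) {n : ℕ} {c : ℝ} (hc : 0 ≤ c)
    (hbound : ∀ y, tnorm Sa Sadm y ≤ ∑ i ∈ Finset.range (n + 1),
      famNorm (famF Sa Sadm i) y / 2 ^ i + c * sSup (admissibleSums Sa Sadm (famG Sadm n) y))
    (x : ℕ →₀ ℝ) :
    sSup (admissibleSums Sa Sadm Sadm x) ≤ ∑ i ∈ Finset.range (n + 1),
      famNorm (famF Sa Sadm (i + 1)) x / 2 ^ i +
        c * sSup (admissibleSums Sa Sadm (famG Sadm (n + 1)) x) := by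
  have hρ : ∀ i, 0 ≤ famNorm (famF Sa Sadm (i + 1)) x / 2 ^ i :=
    fun i => div_nonneg (famNorm_nonneg _ x) (by positivity)
  refine Real.sSup_le ?_ (add_nonneg (Finset.sum_nonneg fun i _ => hρ i)
    (mul_nonneg hc (sSup_admissibleSums_nonneg x)))
  rintro _ ⟨l, hl, rfl⟩
  calc (l.map fun E => tnorm Sa Sadm (restr E x)).sum
      ≤ (l.map fun E => ∑ i ∈ Finset.range (n + 1),
            famNorm (famF Sa Sadm i) (restr E x) / 2 ^ i +
          c * sSup (admissibleSums Sa Sadm (famG Sadm n) (restr E x))).sum :=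
        List.sum_le_sum fun E _ => hbound (restr E x)
    _ = ∑ i ∈ Finset.range (n + 1),
            (l.map fun E => famNorm (famF Sa Sadm i) (restr E x)).sum / 2 ^ i +
          c * (l.map fun E => sSup (admissibleSums Sa Sadm (famG Sadm n) (restr E x))).sum := by
        simpa [List.sum_map_add, List.sum_map_mul_left, div_eq_mul_inv, List.sum_map_mul_right]
          using Multiset.sum_map_sum (m := (l : Multiset (Finset ℕ)))
            (f := fun E i => famNorm (famF Sa Sadm i) (restr E x) / 2 ^ i)
    _ ≤ _ := by
      gcongr with i
      · exact sum_famNorm_le_famNorm_famComp hh hs (hereditary_famF hSa hh hs i)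
          (empty_mem_famF hSa0 h0 i) hl x
      · exact sum_sSup_admissibleSums_le hh hs (hereditary_famG hh hs n) (spreading_famG hs n)
          (empty_mem_famG h0 n) hl x

theorem tnorm_le_sum_famNorm_add_sSup (hSa : Hereditary Sa) (hSa0 : ∅ ∈ Sa) (hh : Hereditary Sadm)
    (hs : Spreading Sadm) (h0 : ∅ ∈ Sadm) (n : ℕ) (x : ℕ →₀ ℝ) :
    tnorm Sa Sadm x ≤ ∑ i ∈ Finset.range (n + 1), famNorm (famF Sa Sadm i) x / 2 ^ i +
      1 / 2 ^ (n + 1) * sSup (admissibleSums Sa Sadm (famG Sadm n) x) := by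
  induction n generalizing x with
  | zero => simpa [famF, famG] using tnorm_le_famNorm_add_half_sSup x
  | succ n ih =>
    have hstep :=
      sSup_admissibleSums_le_of_forall_tnorm_le hSa hSa0 hh hs h0 (by positivity) ih x
    calc tnorm Sa Sadm x ≤ famNorm Sa x + 1 / 2 * sSup (admissibleSums Sa Sadm Sadm x) :=
          tnorm_le_famNorm_add_half_sSup x
      _ ≤ famNorm Sa x + 1 / 2 * (∑ i ∈ Finset.range (n + 1),
            famNorm (famF Sa Sadm (i + 1)) x / 2 ^ i +
              1 / 2 ^ (n + 1) * sSup (admissibleSums Sa Sadm (famG Sadm (n + 1)) x)) := by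
          gcongr
      _ = _ := by
        have hterm : ∀ i ∈ Finset.range (n + 1),
            1 / 2 * (famNorm (famF Sa Sadm (i + 1)) x / 2 ^ i) =
              famNorm (famF Sa Sadm (i + 1)) x / 2 ^ (i + 1) :=
          fun i _ => by rw [pow_succ]; ring
        rw [Finset.sum_range_succ' _ (n + 1), mul_add, Finset.mul_sum, Finset.sum_congr rfl hterm,
          pow_succ 2 (n + 1), pow_zero]
        change _ = _ + famNorm Sa x / 1 + _
        ring

end Estimates

theorem statement5_general (seq : Ordinal → ℕ → Ordinal) (hseq : IsCtblLadder seq)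
    (a b : Ordinal) (ha : a.card ≤ Cardinal.aleph0) (hb : b.card ≤ Cardinal.aleph0)
    (x : ℕ →₀ ℝ) (n : ℕ) :
    tnorm (schreier seq a) (sqFam (schreier seq b)) x ≤
      (∑ i ∈ Finset.range (n + 1),
        famNorm (famF (schreier seq a) (sqFam (schreier seq b)) i) x / 2 ^ i) +
      (1 / 2 ^ (n + 1)) *
        sSup {r : ℝ | ∃ l : List (Finset ℕ),
          IsAdmissible (famG (sqFam (schreier seq b)) n) l ∧
          r = (l.map fun E =>
            tnorm (schreier seq a) (sqFam (schreier seq b)) (restr E x)).sum} :=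
  tnorm_le_sum_famNorm_add_sSup (hereditary_schreier hseq ha) (empty_mem_schreier hseq ha)
    (hereditary_schreier hseq hb).sqFam spreading_schreier.sqFam
    (empty_mem_sqFam (empty_mem_schreier hseq hb)) n x

/-- Proposition 5 of the paper: for all `a ∈ c₀₀` and `n ≥ 0`,
`‖a‖_{T̈} ≤ ∑_{i=0}^n ρ′_i(a)/2^i + 2^{-(n+1)} sup{∑ ‖E_i a‖_{T̈}}`, the supremum
being over all `𝓖′_{n+1}`-admissible collections `{E₁, …, E_j}`.
(Here `famG (sqFam Sβ) n = 𝓖′_{n+1}` and `famF Sα (sqFam Sβ) i = 𝓕′_i`.) -/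
theorem statement5 (seq : Ordinal → ℕ → Ordinal) (hseq : IsCtblLadder seq)
    (a b : Ordinal) (ha : a.card ≤ Cardinal.aleph0) (hb : b.card ≤ Cardinal.aleph0)
    (hb0 : b ≠ 0) (x : ℕ →₀ ℝ) (n : ℕ) :
    tnorm (schreier seq a) (sqFam (schreier seq b)) x ≤
      (∑ i ∈ Finset.range (n + 1),
        famNorm (famF (schreier seq a) (sqFam (schreier seq b)) i) x / 2 ^ i) +
      (1 / 2 ^ (n + 1)) *
        sSup {r : ℝ | ∃ l : List (Finset ℕ),
          IsAdmissible (famG (sqFam (schreier seq b)) n) l ∧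
          r = (l.map fun E =>
            tnorm (schreier seq a) (sqFam (schreier seq b)) (restr E x)).sum} :=
  statement5_general seq hseq a b ha hb x n

end LTIndex
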